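/- arXiv:2512.02958 — 3 statements merged into one kernel-verified Lean document; each statement's English description precedes it below -/
import Mathlib

section
/- Let $t \ge 2$ and let $G$ be a simple graph on $n$ vertices. Then for every $x \in \Delta^{n-1}$ one has $\Phi(G,x) \ge 0$, i.e., $\sum_{v \in V(G)} \frac{x_v}{c(v)^t}\binom{c(v)}{t} \ge \sum_{K_t \subseteq G} \prod_{v \in V(K_t)} x_v$, where the second sum runs over all copies of $K_t$ in $G$. -/
open Finset
open scoped Classical

/-- The order of the largest clique of `G` containing the vertex `v`. -/
noncomputable def cliqueAt {n : ℕ} (G : SimpleGraph (Fin n)) (v : Fin n) : ℕ :=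
  ((univ : Finset (Finset (Fin n))).filter
    (fun s : Finset (Fin n) => G.IsClique (s : Set (Fin n)) ∧ v ∈ s)).sup Finset.card

/-- The set of copies of `K_t` in `G`, as `t`-element vertex sets inducing cliques. -/
noncomputable def ktCliques {n : ℕ} (G : SimpleGraph (Fin n)) (t : ℕ) :
    Finset (Finset (Fin n)) :=
  (univ : Finset (Finset (Fin n))).filter
    (fun s : Finset (Fin n) => s.card = t ∧ G.IsClique (s : Set (Fin n)))

/-- `N(G, K_t)`, the number of copies of `K_t` in `G`. -/
noncomputable def numKt {n : ℕ} (G : SimpleGraph (Fin n)) (t : ℕ) : ℕ :=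
  (ktCliques G t).card

/-- The standard simplex `Δ^{n-1}`. -/
def simplex (n : ℕ) : Set (Fin n → ℝ) :=
  {x | (∀ i, 0 ≤ x i) ∧ ∑ i, x i = 1}

/-- `Φ(G, x) = A(G,x) - B(G,x)`. -/
noncomputable def PhiFn {n : ℕ} (G : SimpleGraph (Fin n)) (t : ℕ) (x : Fin n → ℝ) : ℝ :=
  (∑ v, x v * ((cliqueAt G v).choose t : ℝ) / (cliqueAt G v : ℝ) ^ t)
    - ∑ s ∈ ktCliques G t, ∏ v ∈ s, x v

/-- The support of `x`, as a finset. -/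
noncomputable def suppF {n : ℕ} (x : Fin n → ℝ) : Finset (Fin n) :=
  (univ : Finset (Fin n)).filter (fun v => 0 < x v)

/-- `x` is a minimizer of `Φ(G, ·)` over the simplex. -/
def IsMinimizer {n : ℕ} (G : SimpleGraph (Fin n)) (t : ℕ) (x : Fin n → ℝ) : Prop :=
  x ∈ simplex n ∧ ∀ y ∈ simplex n, PhiFn G t x ≤ PhiFn G t y

/-- `δ_{ij}(x)`. -/
noncomputable def deltaFn {n : ℕ} (G : SimpleGraph (Fin n)) (t : ℕ) (x : Fin n → ℝ)
    (i j : Fin n) : ℝ :=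
  (((cliqueAt G i).choose t : ℝ) / (cliqueAt G i : ℝ) ^ t
      - ((cliqueAt G j).choose t : ℝ) / (cliqueAt G j : ℝ) ^ t)
    - ((∑ s ∈ (ktCliques G (t - 1)).filter (fun s => ∀ v ∈ s, G.Adj i v), ∏ v ∈ s, x v)
      - (∑ s ∈ (ktCliques G (t - 1)).filter (fun s => ∀ v ∈ s, G.Adj j v), ∏ v ∈ s, x v))

/-- `G` is a regular complete multipartite graph: the vertices can be colored so that
adjacency is exactly "different colors" and all color classes have the same size. -/
def IsRegularCompleteMultipartite {n : ℕ} (G : SimpleGraph (Fin n)) : Prop :=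
  ∃ (r : ℕ) (f : Fin n → Fin r),
    (∀ u v, G.Adj u v ↔ f u ≠ f v) ∧
    (∀ a b : Fin r,
      ((univ : Finset (Fin n)).filter (fun v => f v = a)).card =
        ((univ : Finset (Fin n)).filter (fun v => f v = b)).card)

/-!
Write `B(G,x) ≤ A(G,x)` as `0 ≤ Φ(G,x)` and induct on the size of the support of `x`.
If two vertices `i, j` of the support are not adjacent, no copy of `K_t` contains both, so
`Φ(G,·)` is affine on the segment that moves mass between `i` and `j`; `x` is a convex
combination of the two endpoints, which have smaller support. If the support `S` is a clique
with `k` vertices, Maclaurin's inequality bounds `B(G,x)` by `C(k,t)/k^t`; since `C(N,t)/N^t`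
increases with `N` and `c(v) ≥ k` on `S`, this is at most `A(G,x)`.
-/

lemma add_one_mul_mul_pow_le (t : ℕ) {m p : ℝ} (hm : 0 ≤ m) (hp : 0 ≤ p) :
    ((t : ℝ) + 1) * m * p ^ t ≤ m ^ (t + 1) + t * p ^ (t + 1) := by
  rcases hp.eq_or_lt with rfl | hp
  · rcases t with _ | t <;> simp [hm]
  have bernoulli :=
    one_add_mul_le_pow (a := m / p - 1) (by linarith [div_nonneg hm hp.le]) (t + 1)
  rw [add_sub_cancel, div_pow, le_div_iff₀ (by positivity)] at bernoulli
  have hexpand : (1 + ((t + 1 : ℕ) : ℝ) * (m / p - 1)) * p ^ (t + 1)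
      = (t + 1) * m * p ^ t - t * p ^ (t + 1) := by
    field_simp
    push_cast
    ring
  linarith

lemma choose_mul_pow_add_le (k t : ℕ) {a p : ℝ} (ha : 0 ≤ a) (hp : 0 ≤ p) :
    (k.choose (t + 1) : ℝ) * p ^ (t + 1) + a * (k.choose t * p ^ t) ≤
      ((k + 1).choose (t + 1) : ℝ) * ((a + k * p) / (k + 1)) ^ (t + 1) := by
  set m : ℝ := (a + k * p) / (k + 1) with hm_def
  have ha_eq : a = (k + 1) * m - k * p := by rw [hm_def, mul_div_cancel₀ _ (by positivity)]; ring
  have hsucc_mul : ((k : ℝ) + 1) * k.choose t = (k + 1).choose (t + 1) * ((t : ℝ) + 1) := by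
    exact_mod_cast Nat.add_one_mul_choose_eq k t
  have hpascal : ((k + 1).choose (t + 1) : ℝ) = k.choose t + k.choose (t + 1) := by
    exact_mod_cast Nat.choose_succ_succ k t
  have hlhs : (k.choose (t + 1) : ℝ) * p ^ (t + 1) + a * (k.choose t * p ^ t)
      = (k + 1).choose (t + 1) * ((t + 1) * m * p ^ t - t * p ^ (t + 1)) := by
    linear_combination (m * p ^ t - p ^ (t + 1)) * hsucc_mul - p ^ (t + 1) * hpascal
      + (k.choose t * p ^ t) * ha_eq
  rw [hlhs]
  gcongr
  linarith [add_one_mul_mul_pow_le t (by positivity : 0 ≤ m) hp]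

namespace Multiset

lemma esymm_cons_succ {R : Type*} [CommSemiring R] (a : R) (s : Multiset R) (t : ℕ) :
    (a ::ₘ s).esymm (t + 1) = s.esymm (t + 1) + a * s.esymm t := by
  simp [esymm, powersetCard_cons, map_map, sum_map_mul_left]

theorem esymm_le_choose_mul_pow (t : ℕ) (s : Multiset ℝ) (hs : ∀ a ∈ s, 0 ≤ a) :
    s.esymm t ≤ (card s).choose t * (s.sum / card s) ^ t := by
  induction t generalizing s with
  | zero => simp [esymm]
  | succ t iht =>
    induction s using Multiset.induction_on with
    | empty => simp [esymm, powersetCard_zero_right]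
    | cons a s ihs =>
      have ha : 0 ≤ a := hs a (mem_cons_self a s)
      have hs' : ∀ b ∈ s, 0 ≤ b := fun b hb => hs b (mem_cons_of_mem hb)
      have hmean : (card s : ℝ) * (s.sum / card s) = s.sum := by
        rcases s.empty_or_exists_mem with rfl | ⟨b, hb⟩
        · simp
        · exact mul_div_cancel₀ _ (by exact_mod_cast (card_pos_iff_exists_mem.2 ⟨b, hb⟩).ne')
      calc (a ::ₘ s).esymm (t + 1) = s.esymm (t + 1) + a * s.esymm t := esymm_cons_succ a s t
        _ ≤ (card s).choose (t + 1) * (s.sum / card s) ^ (t + 1)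
            + a * ((card s).choose t * (s.sum / card s) ^ t) :=
          add_le_add (ihs hs') (mul_le_mul_of_nonneg_left (iht s hs') ha)
        _ ≤ _ := choose_mul_pow_add_le _ t ha (div_nonneg (sum_nonneg hs') (by positivity))
        _ = _ := by rw [hmean, card_cons, sum_cons]; push_cast; rfl

end Multiset

theorem Finset.sum_powersetCard_prod_le {α : Type*} (t : ℕ) (S : Finset α) {x : α → ℝ}
    (hx : ∀ v ∈ S, 0 ≤ x v) :
    ∑ s ∈ S.powersetCard t, ∏ v ∈ s, x v ≤
      ((#S).choose t : ℝ) * ((∑ v ∈ S, x v) / #S) ^ t := by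
  simpa [Finset.esymm_map_val] using (S.val.map x).esymm_le_choose_mul_pow t (by simpa using hx)

lemma choose_div_pow_eq_prod (N t : ℕ) :
    (N.choose t : ℝ) / N ^ t = (∏ i ∈ range t, ((N - i : ℕ) : ℝ) / N) / t.factorial := by
  rw [prod_div_distrib, prod_const, card_range, ← Nat.cast_prod,
    ← Nat.descFactorial_eq_prod_range, Nat.descFactorial_eq_factorial_mul_choose, Nat.cast_mul]
  field_simp

lemma natCast_sub_div_mono (i : ℕ) : Monotone fun N : ℕ => ((N - i : ℕ) : ℝ) / N := by
  intro k c hkc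
  rcases lt_or_ge i k with hik | hki
  · have hk : (0 : ℝ) < k := by exact_mod_cast i.zero_le.trans_lt hik
    simp only [Nat.cast_sub hik.le, Nat.cast_sub (hik.le.trans hkc), sub_div]
    rw [div_self hk.ne', div_self (hk.trans_le (by exact_mod_cast hkc)).ne']
    gcongr
  · simp only [Nat.sub_eq_zero_of_le hki, Nat.cast_zero, zero_div]
    positivity

lemma choose_div_pow_mono (t : ℕ) : Monotone fun N : ℕ => (N.choose t : ℝ) / N ^ t := by
  intro k c hkc
  simp only [choose_div_pow_eq_prod]
  gcongr ?_ / _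
  exact prod_le_prod (fun i _ => by positivity) fun i _ => natCast_sub_div_mono i hkc

lemma Finset.prod_add_mul_eq_of_eqOn_erase {ι R : Type*} [CommRing R] {s : Finset ι} (k : ι)
    {y z : ι → R} {a b : R} (hab : a + b = 1) (hyz : ∀ v ∈ s, v ≠ k → y v = z v) :
    ∏ v ∈ s, (a * y v + b * z v) = a * ∏ v ∈ s, y v + b * ∏ v ∈ s, z v := by
  have hcomb : ∀ v ∈ s.erase k, a * y v + b * z v = y v := fun v hv => by
    rw [← hyz v (mem_of_mem_erase hv) (ne_of_mem_erase hv), ← add_mul, hab, one_mul]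
  have hzy : ∏ v ∈ s.erase k, z v = ∏ v ∈ s.erase k, y v :=
    prod_congr rfl fun v hv => (hyz v (mem_of_mem_erase hv) (ne_of_mem_erase hv)).symm
  by_cases hk : k ∈ s
  · rw [← mul_prod_erase s _ hk, ← mul_prod_erase s y hk, ← mul_prod_erase s z hk,
      prod_congr rfl hcomb, hzy]
    ring
  · rw [erase_eq_of_notMem hk] at hcomb hzy
    rw [prod_congr rfl hcomb, hzy, ← add_mul, hab, one_mul]

section Graph

variable {n : ℕ}

lemma le_cliqueAt {G : SimpleGraph (Fin n)} {s : Finset (Fin n)} {v : Fin n}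
    (hs : G.IsClique (s : Set (Fin n))) (hv : v ∈ s) : s.card ≤ cliqueAt G v :=
  le_sup (f := Finset.card) (mem_filter.2 ⟨mem_univ s, hs, hv⟩)

lemma mem_suppF {x : Fin n → ℝ} {v : Fin n} : v ∈ suppF x ↔ 0 < x v := by
  simp [suppF]

lemma eq_zero_of_notMem_suppF {x : Fin n → ℝ} (hx : ∀ v, 0 ≤ x v) {v : Fin n}
    (hv : v ∉ suppF x) : x v = 0 :=
  le_antisymm (not_lt.1 (mt mem_suppF.2 hv)) (hx v)

lemma sum_suppF {x : Fin n → ℝ} (hx : ∀ v, 0 ≤ x v) : ∑ v ∈ suppF x, x v = ∑ v, x v :=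
  sum_subset (subset_univ _) fun _ _ hv => eq_zero_of_notMem_suppF hx hv

lemma sum_ktCliques_prod_le (G : SimpleGraph (Fin n)) (t : ℕ) {x : Fin n → ℝ}
    (hx : ∀ v, 0 ≤ x v) :
    ∑ s ∈ ktCliques G t, ∏ v ∈ s, x v ≤ ∑ s ∈ (suppF x).powersetCard t, ∏ v ∈ s, x v := by
  calc ∑ s ∈ ktCliques G t, ∏ v ∈ s, x v
      = ∑ s ∈ ktCliques G t with s ⊆ suppF x, ∏ v ∈ s, x v := by
        refine (sum_filter_of_ne fun s _ hs v hv => ?_).symm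
        exact mem_suppF.2 ((hx v).lt_of_ne (Ne.symm (prod_ne_zero_iff.1 hs v hv)))
    _ ≤ ∑ s ∈ (suppF x).powersetCard t, ∏ v ∈ s, x v := by
        refine sum_le_sum_of_subset_of_nonneg (fun s hs => ?_)
          fun s _ _ => prod_nonneg fun v _ => hx v
        simp only [ktCliques, mem_filter] at hs
        exact mem_powersetCard.2 ⟨hs.2, hs.1.2.1⟩

lemma phiFn_nonneg_of_isClique {G : SimpleGraph (Fin n)} (t : ℕ) {x : Fin n → ℝ}
    (hx : x ∈ simplex n) (hS : G.IsClique (suppF x : Set (Fin n))) : 0 ≤ PhiFn G t x := by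
  obtain ⟨hx0, hx1⟩ := hx
  set k := #(suppF x)
  have hmaclaurin :
      ∑ s ∈ (suppF x).powersetCard t, ∏ v ∈ s, x v ≤ (k.choose t : ℝ) / k ^ t := by
    simpa [sum_suppF hx0, hx1, div_pow, div_eq_mul_inv] using
      sum_powersetCard_prod_le t (suppF x) fun v _ => hx0 v
  have hmono : (k.choose t : ℝ) / k ^ t ≤
      ∑ v, x v * ((cliqueAt G v).choose t : ℝ) / (cliqueAt G v : ℝ) ^ t := by
    calc (k.choose t : ℝ) / k ^ t = ∑ v, x v * ((k.choose t : ℝ) / k ^ t) := by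
          rw [← sum_mul, hx1, one_mul]
      _ ≤ _ := by
        refine sum_le_sum fun v _ => ?_
        rw [mul_div_assoc]
        by_cases hv : v ∈ suppF x
        · exact mul_le_mul_of_nonneg_left (choose_div_pow_mono t (le_cliqueAt hS hv)) (hx0 v)
        · simp [eq_zero_of_notMem_suppF hx0 hv]
  rw [PhiFn, sub_nonneg]
  linarith [sum_ktCliques_prod_le G t hx0]

lemma phiFn_eq_of_not_adj {G : SimpleGraph (Fin n)} (t : ℕ) {i j : Fin n}
    (hij : ¬G.Adj i j) {x y z : Fin n → ℝ} {a b : ℝ} (hab : a + b = 1)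
    (hx : ∀ v, x v = a * y v + b * z v) (hyz : ∀ v, v ≠ i → v ≠ j → y v = z v) :
    PhiFn G t x = a * PhiFn G t y + b * PhiFn G t z := by
  have hB : ∀ s ∈ ktCliques G t, ∏ v ∈ s, x v = a * ∏ v ∈ s, y v + b * ∏ v ∈ s, z v := by
    intro s hs
    have hclique : G.IsClique (s : Set (Fin n)) := (mem_filter.1 hs).2.2
    simp only [hx]
    by_cases hj : j ∈ s
    · refine prod_add_mul_eq_of_eqOn_erase j hab fun v hv hvj => hyz v ?_ hvj
      rintro rfl
      exact hij (hclique hv hj hvj)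
    · exact prod_add_mul_eq_of_eqOn_erase i hab fun v hv hvi =>
        hyz v hvi fun hvj => hj (hvj ▸ hv)
  have hA (w : Fin n → ℝ) :
      ∑ v, x v * w v = a * ∑ v, y v * w v + b * ∑ v, z v * w v := by
    simp [hx, add_mul, sum_add_distrib, mul_sum, mul_assoc]
  simp only [PhiFn, mul_div_assoc, hA, sum_congr rfl hB, sum_add_distrib, ← mul_sum]
  ring

end Graph

section MoveMass

variable {n : ℕ} {x : Fin n → ℝ} {i j : Fin n}

def moveMass (x : Fin n → ℝ) (i j : Fin n) : Fin n → ℝ :=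
  x + Pi.single i (x j) - Pi.single j (x j)

lemma moveMass_apply_of_ne {v : Fin n} (hvi : v ≠ i) (hvj : v ≠ j) :
    moveMass x i j v = x v := by
  simp [moveMass, hvi, hvj]

lemma moveMass_apply_left (hij : i ≠ j) : moveMass x i j i = x i + x j := by
  simp [moveMass, hij]

lemma moveMass_apply_right (hij : i ≠ j) : moveMass x i j j = 0 := by
  simp [moveMass, hij.symm]

lemma moveMass_mem_simplex (hij : i ≠ j) (hx : x ∈ simplex n) :
    moveMass x i j ∈ simplex n := by
  refine ⟨fun v => ?_, ?_⟩
  · rcases eq_or_ne v i with rfl | hvi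
    · rw [moveMass_apply_left hij]
      exact add_nonneg (hx.1 v) (hx.1 j)
    rcases eq_or_ne v j with rfl | hvj
    · rw [moveMass_apply_right hij]
    · rw [moveMass_apply_of_ne hvi hvj]
      exact hx.1 v
  · simp [moveMass, sum_add_distrib, hx.2]

lemma card_suppF_moveMass_lt (hij : i ≠ j) (hi : i ∈ suppF x) (hj : j ∈ suppF x) :
    #(suppF (moveMass x i j)) < #(suppF x) := by
  refine (card_le_card fun v hv => ?_).trans_lt (card_erase_lt_of_mem hj)
  rw [mem_suppF] at hv
  have hvj : v ≠ j := by
    rintro rfl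
    rw [moveMass_apply_right hij] at hv
    exact hv.false
  refine mem_erase.2 ⟨hvj, ?_⟩
  rcases eq_or_ne v i with rfl | hvi
  · exact hi
  · rwa [moveMass_apply_of_ne hvi hvj, ← mem_suppF] at hv

lemma eq_moveMass_convex_comb (hij : i ≠ j) (hσ : x i + x j ≠ 0) (v : Fin n) :
    x v = x i / (x i + x j) * moveMass x i j v + x j / (x i + x j) * moveMass x j i v := by
  rcases eq_or_ne v i with rfl | hvi
  · rw [moveMass_apply_left hij, moveMass_apply_right hij.symm]
    field_simp
    ring
  rcases eq_or_ne v j with rfl | hvj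
  · rw [moveMass_apply_right hij, moveMass_apply_left hij.symm]
    field_simp
    ring
  · rw [moveMass_apply_of_ne hvi hvj, moveMass_apply_of_ne hvj hvi]
    field_simp

end MoveMass

theorem stmt2_general {n : ℕ} (t : ℕ) (G : SimpleGraph (Fin n))
    (x : Fin n → ℝ) (hx : x ∈ simplex n) :
    ∑ s ∈ ktCliques G t, ∏ v ∈ s, x v ≤
      ∑ v, x v * ((cliqueAt G v).choose t : ℝ) / (cliqueAt G v : ℝ) ^ t := by
  suffices 0 ≤ PhiFn G t x from sub_nonneg.1 this
  induction hm : #(suppF x) using Nat.strong_induction_on generalizing x with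
  | _ m ih =>
  by_cases hS : G.IsClique (suppF x : Set (Fin n))
  · exact phiFn_nonneg_of_isClique t hx hS
  obtain ⟨i, hi, j, hj, hij, hnadj⟩ : ∃ i ∈ suppF x, ∃ j ∈ suppF x, i ≠ j ∧ ¬G.Adj i j := by
    simpa [SimpleGraph.IsClique, Set.Pairwise] using hS
  have hσ : 0 < x i + x j := add_pos (mem_suppF.1 hi) (mem_suppF.1 hj)
  have hy := ih _ (hm ▸ card_suppF_moveMass_lt hij hi hj) _
    (moveMass_mem_simplex hij hx) rfl
  have hz := ih _ (hm ▸ card_suppF_moveMass_lt hij.symm hj hi) _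
    (moveMass_mem_simplex hij.symm hx) rfl
  rw [phiFn_eq_of_not_adj t hnadj (by field_simp) (eq_moveMass_convex_comb hij hσ.ne')
    fun v hvi hvj => (moveMass_apply_of_ne hvi hvj).trans (moveMass_apply_of_ne hvj hvi).symm]
  exact add_nonneg (mul_nonneg (div_nonneg (hx.1 i) hσ.le) hy)
    (mul_nonneg (div_nonneg (hx.1 j) hσ.le) hz)

/-- `Φ(G, x) ≥ 0` for every `x` in the simplex. -/
theorem stmt2 {n : ℕ} (t : ℕ) (ht : 2 ≤ t) (G : SimpleGraph (Fin n))
    (x : Fin n → ℝ) (hx : x ∈ simplex n) :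
    ∑ s ∈ ktCliques G t, ∏ v ∈ s, x v ≤
      ∑ v, x v * ((cliqueAt G v).choose t : ℝ) / (cliqueAt G v : ℝ) ^ t :=
  stmt2_general t G x hx
end

section
/- Let $t \ge 2$ and let $G$ be a simple graph on $n$ vertices. If $x \in \Delta^{n-1}$ is a minimizer of $\Phi(G,\cdot)$ over $\Delta^{n-1}$ whose support is minimal (i.e., no minimizer $y$ satisfies $\operatorname{Supp}(y) \subsetneq \operatorname{Supp}(x)$), then the induced subgraph $G[\operatorname{Supp}(x)]$ is a clique. -/
open Finset
open scoped Classical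

lemma sum_pair_if {n : ℕ} (i j : Fin n) (hij : i ≠ j) (p q : ℝ) :
    ∑ v : Fin n, (if v = i then p else if v = j then q else 0) = p + q := by
  have h : ∀ v : Fin n, (if v = i then p else if v = j then q else 0)
      = (if v = i then p else 0) + (if v = j then q else 0) := by
    intro v
    by_cases h1 : v = i
    · subst h1; simp [hij]
    · simp [h1]
  simp_rw [h]
  rw [Finset.sum_add_distrib, Finset.sum_ite_eq', Finset.sum_ite_eq']
  simp

lemma phi_affine {n : ℕ} (G : SimpleGraph (Fin n)) (t : ℕ) (x : Fin n → ℝ)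
    (i j : Fin n) (hij : i ≠ j) (hna : ¬ G.Adj i j) :
    ∃ c : ℝ, ∀ s : ℝ,
      PhiFn G t (fun v => x v + s * (if v = i then 1 else if v = j then -1 else 0))
        = PhiFn G t x + s * c := by
  set k : Fin n → ℝ := fun v => ((cliqueAt G v).choose t : ℝ) / (cliqueAt G v : ℝ) ^ t with hk
  set e : Finset (Fin n) → ℝ := fun K =>
    if i ∈ K then ∏ v ∈ K.erase i, x v
    else if j ∈ K then -∏ v ∈ K.erase j, x v else 0 with he
  refine ⟨(k i - k j) - ∑ K ∈ ktCliques G t, e K, fun s => ?_⟩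
  have hA : ∑ v, (x v + s * (if v = i then 1 else if v = j then -1 else 0))
        * ((cliqueAt G v).choose t : ℝ) / (cliqueAt G v : ℝ) ^ t
      = (∑ v, x v * ((cliqueAt G v).choose t : ℝ) / (cliqueAt G v : ℝ) ^ t)
        + s * (k i - k j) := by
    have h1 : ∀ v : Fin n,
        (x v + s * (if v = i then 1 else if v = j then -1 else 0))
          * ((cliqueAt G v).choose t : ℝ) / (cliqueAt G v : ℝ) ^ t
        = x v * ((cliqueAt G v).choose t : ℝ) / (cliqueAt G v : ℝ) ^ t
          + s * (if v = i then k i else if v = j then -k j else 0) := by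
      intro v
      by_cases h1 : v = i
      · subst h1; simp only [eq_self_iff_true, if_true, hk]; ring
      · by_cases h2 : v = j
        · subst h2; simp only [if_neg h1, eq_self_iff_true, if_true, hk]; ring
        · simp only [if_neg h1, if_neg h2]; ring
    rw [Finset.sum_congr rfl (fun v _ => h1 v), Finset.sum_add_distrib, ← Finset.mul_sum,
      sum_pair_if i j hij (k i) (-k j)]
    ring
  have hB : ∑ K ∈ ktCliques G t,
        ∏ v ∈ K, (x v + s * (if v = i then 1 else if v = j then -1 else 0))
      = (∑ K ∈ ktCliques G t, ∏ v ∈ K, x v) + s * ∑ K ∈ ktCliques G t, e K := by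
    have h2 : ∀ K ∈ ktCliques G t,
        ∏ v ∈ K, (x v + s * (if v = i then 1 else if v = j then -1 else 0))
          = (∏ v ∈ K, x v) + s * e K := by
      intro K hK
      rw [ktCliques, Finset.mem_filter] at hK
      obtain ⟨-, -, hKc⟩ := hK
      by_cases hi : i ∈ K
      · have hj : j ∉ K := by
          intro hj
          exact hna (hKc (by simpa using hi) (by simpa using hj) hij)
        have hprod : ∀ v ∈ K.erase i,
            x v + s * (if v = i then 1 else if v = j then -1 else 0) = x v := by
          intro v hv
          have hvi : v ≠ i := (Finset.mem_erase.mp hv).1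
          have hvj : v ≠ j := fun h => hj (h ▸ (Finset.mem_erase.mp hv).2)
          simp [hvi, hvj]
        rw [← Finset.mul_prod_erase K _ hi, Finset.prod_congr rfl hprod,
          ← Finset.mul_prod_erase K x hi]
        simp only [he, hi, eq_self_iff_true, if_true]
        ring
      · by_cases hj : j ∈ K
        · have hprod : ∀ v ∈ K.erase j,
              x v + s * (if v = i then 1 else if v = j then -1 else 0) = x v := by
            intro v hv
            have hvj : v ≠ j := (Finset.mem_erase.mp hv).1
            have hvi : v ≠ i := fun h => hi (h ▸ (Finset.mem_erase.mp hv).2)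
            simp [hvi, hvj]
          rw [← Finset.mul_prod_erase K _ hj, Finset.prod_congr rfl hprod,
            ← Finset.mul_prod_erase K x hj]
          simp only [he, hi, hj, if_neg hij.symm, eq_self_iff_true, if_true, if_false]
          ring
        · have hprod : ∀ v ∈ K,
              x v + s * (if v = i then 1 else if v = j then -1 else 0) = x v := by
            intro v hv
            have hvi : v ≠ i := fun h => hi (h ▸ hv)
            have hvj : v ≠ j := fun h => hj (h ▸ hv)
            simp [hvi, hvj]
          rw [Finset.prod_congr rfl hprod]
          simp [he, hi, hj]
    rw [Finset.sum_congr rfl h2, Finset.sum_add_distrib, ← Finset.mul_sum]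
  simp only [PhiFn]
  rw [hA, hB]
  ring

/-- A minimizer of `Φ(G, ·)` with minimal support has support inducing a clique. -/
theorem stmt7 {n : ℕ} (t : ℕ) (ht : 2 ≤ t) (G : SimpleGraph (Fin n))
    (x : Fin n → ℝ) (hx : IsMinimizer G t x)
    (hmin : ∀ y : Fin n → ℝ, IsMinimizer G t y → ¬ suppF y ⊂ suppF x) :
    G.IsClique (suppF x : Set (Fin n)) := by
  rw [SimpleGraph.isClique_iff]
  intro a ha b hb hab
  simp only [suppF, Finset.coe_filter, Finset.mem_univ, true_and, Set.mem_setOf_eq] at ha hb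
  by_contra hna
  obtain ⟨c, hc⟩ := phi_affine G t x a b hab hna
  set y : ℝ → Fin n → ℝ :=
    fun s v => x v + s * (if v = a then 1 else if v = b then -1 else 0) with hy
  have hc' : ∀ s, PhiFn G t (y s) = PhiFn G t x + s * c := hc
  obtain ⟨⟨hxnn, hxsum⟩, hxmin⟩ := hx
  have hsum : ∀ s : ℝ, ∑ v, y s v = 1 := by
    intro s
    simp only [hy]
    rw [Finset.sum_add_distrib, ← Finset.mul_sum, sum_pair_if a b hab 1 (-1), hxsum]
    ring
  have hmem : ∀ s : ℝ, -x a ≤ s → s ≤ x b → y s ∈ simplex n := by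
    intro s hs1 hs2
    refine ⟨fun v => ?_, hsum s⟩
    by_cases h1 : v = a
    · subst h1; simp only [hy, eq_self_iff_true, if_true]; linarith
    · by_cases h2 : v = b
      · subst h2; simp only [hy, if_neg h1, eq_self_iff_true, if_true]; linarith
      · simp only [hy, if_neg h1, if_neg h2]
        have := hxnn v; linarith
  have hc0 : c = 0 := by
    have h1 : PhiFn G t x ≤ PhiFn G t (y (x b)) :=
      hxmin _ (hmem _ (by linarith) le_rfl)
    have h2 : PhiFn G t x ≤ PhiFn G t (y (-x a)) :=
      hxmin _ (hmem _ le_rfl (by linarith))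
    rw [hc'] at h1 h2
    nlinarith
  have hymin : IsMinimizer G t (y (-x a)) := by
    refine ⟨hmem _ le_rfl (by linarith), fun z hz => ?_⟩
    rw [hc', hc0]
    simpa using hxmin z hz
  refine hmin _ hymin ?_
  rw [Finset.ssubset_iff_of_subset]
  · refine ⟨a, ?_, ?_⟩
    · simp [suppF, ha]
    · simp [suppF, hy]
  · intro v hv
    simp only [suppF, Finset.mem_filter, Finset.mem_univ, true_and] at hv ⊢
    by_cases h1 : v = a
    · subst h1; simp [hy] at hv
    · by_cases h2 : v = b
      · subst h2; exact hb
      · simpa [hy, h1, h2] using hv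
end

section
/- Let $t \ge 2$ and let $G$ be a simple graph on $n$ vertices. If $x \in \Delta^{n-1}$ is a minimizer of $\Phi(G,\cdot)$ over $\Delta^{n-1}$ whose support induces a clique of size $k$ in $G$, then $\Phi(G,x) \ge \frac{1}{k^t}\binom{k}{t} - \sum_{K_t \subseteq \operatorname{Supp}(x)} \prod_{v \in V(K_t)} x_v \ge 0$; in particular, by Maclaurin's inequality, $\sum_{K_t \subseteq \operatorname{Supp}(x)} \prod_{v \in V(K_t)} x_v \le \frac{1}{k^t}\binom{k}{t}$. -/
open Finset
open scoped Classical

/-! The `x_v`-weighted average of `C(c(v), t) / c(v)^t` over the support is at least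
`C(k, t) / k^t`, since `c(v) ≥ k` on the support and `m ↦ C(m, t) / m^t` is monotone; on the
other side, every copy of `K_t` meeting `x` lies inside the support, and the support is a clique,
so the clique sum is the elementary symmetric function `e_t` of the weights on the support.
Maclaurin's inequality `e_t(w) ≤ C(k, t) / k^t` on the simplex is proved by smoothing: among the
maximizers of `e_t` take one of least `∑ w_i²`; averaging two unequal coordinates does not
decrease `e_t` but strictly decreases `∑ w_i²`, so that maximizer is the barycentre. -/

section ElementarySymmetric

variable {ι κ R : Type*} [CommSemiring R]

def esymmOn (s : Finset ι) (m : ℕ) (w : ι → R) : R :=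
  ∑ T ∈ s.powersetCard m, ∏ i ∈ T, w i

lemma esymmOn_zero (s : Finset ι) (w : ι → R) : esymmOn s 0 w = 1 := by
  simp [esymmOn]

lemma esymmOn_one (s : Finset ι) (w : ι → R) :
    esymmOn s 1 w = ∑ i ∈ s, w i := by
  simp [esymmOn, powersetCard_one]

lemma esymmOn_const (s : Finset ι) (m : ℕ) (a : R) :
    esymmOn s m (fun _ => a) = s.card.choose m * a ^ m := by
  rw [esymmOn, sum_congr rfl fun T hT => by rw [prod_const, (mem_powersetCard.1 hT).2],
    sum_const, card_powersetCard, nsmul_eq_mul]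

lemma esymmOn_map (s : Finset ι) (f : ι ↪ κ) (m : ℕ) (w : κ → R) :
    esymmOn (s.map f) m w = esymmOn s m (w ∘ f) := by
  simp only [esymmOn, powersetCard_map, sum_map]
  exact sum_congr rfl fun T _ => prod_map T f w

lemma esymmOn_congr {s : Finset ι} (m : ℕ) {w w' : ι → R}
    (h : ∀ i ∈ s, w i = w' i) : esymmOn s m w = esymmOn s m w' :=
  sum_congr rfl fun _ hT => prod_congr rfl fun i hi => h i ((mem_powersetCard.1 hT).1 hi)

lemma esymmOn_insert {s : Finset ι} {a : ι} (ha : a ∉ s) (m : ℕ) (w : ι → R) :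
    esymmOn (insert a s) (m + 1) w = esymmOn s (m + 1) w + w a * esymmOn s m w := by
  have hnotin : ∀ T ∈ s.powersetCard m, a ∉ T := fun T hT haT =>
    ha ((mem_powersetCard.1 hT).1 haT)
  rw [esymmOn, powersetCard_succ_insert ha, sum_union, sum_image, esymmOn, esymmOn, mul_sum]
  · exact congrArg _ (sum_congr rfl fun T hT => prod_insert (hnotin T hT))
  · intro T hT T' hT' hTT'
    rw [← erase_insert (hnotin T hT), ← erase_insert (hnotin T' hT'), hTT']
  · refine disjoint_left.2 fun T hT hT' => ?_
    obtain ⟨U, -, rfl⟩ := mem_image.1 hT'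
    exact ha ((mem_powersetCard.1 hT).1 (mem_insert_self a U))

lemma esymmOn_nonneg {s : Finset ι} (m : ℕ) {w : ι → ℝ} (hw : ∀ i ∈ s, 0 ≤ w i) :
    0 ≤ esymmOn s m w :=
  sum_nonneg fun _ hT => prod_nonneg fun i hi => hw i ((mem_powersetCard.1 hT).1 hi)

lemma continuous_esymmOn (s : Finset ι) (m : ℕ) : Continuous (esymmOn (ι := ι) (R := ℝ) s m) :=
  continuous_finsetSum _ fun _ _ => continuous_finsetProd _ fun i _ => continuous_apply i

end ElementarySymmetric

section Smoothing

variable {ι : Type*} [Fintype ι]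

noncomputable def averagePair (z : ι → ℝ) (i j : ι) : ι → ℝ :=
  Function.update (Function.update z i ((z i + z j) / 2)) j ((z i + z j) / 2)

lemma sum_comp_averagePair (φ : ℝ → ℝ) (z : ι → ℝ) {i j : ι} (hij : i ≠ j) :
    ∑ l, φ (averagePair z i j l) + (φ (z i) + φ (z j)) =
      ∑ l, φ (z l) + 2 * φ ((z i + z j) / 2) := by
  have hj : j ∈ univ.erase i := mem_erase.2 ⟨hij.symm, mem_univ j⟩
  have split : ∀ f : ι → ℝ, ∑ l, f l = f i + f j + ∑ l ∈ (univ.erase i).erase j, f l :=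
    fun f => by rw [add_assoc, add_sum_erase _ _ hj, add_sum_erase _ _ (mem_univ i)]
  have hrest : ∀ l ∈ (univ.erase i).erase j, averagePair z i j l = z l := fun l hl => by
    obtain ⟨hlj, hli⟩ := mem_erase.1 hl
    rw [averagePair, Function.update_of_ne hlj, Function.update_of_ne (ne_of_mem_erase hli)]
  rw [split, split, sum_congr rfl fun l hl => congrArg φ (hrest l hl), averagePair,
    Function.update_self, Function.update_of_ne hij, Function.update_self]
  ring

lemma sum_averagePair (z : ι → ℝ) (i j : ι) : ∑ l, averagePair z i j l = ∑ l, z l := by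
  rcases eq_or_ne i j with rfl | hij
  · simp [averagePair]
  linarith [sum_comp_averagePair (fun y => y) z hij]

lemma averagePair_mem_stdSimplex {z : ι → ℝ} (hz : z ∈ stdSimplex ℝ ι) (i j : ι) :
    averagePair z i j ∈ stdSimplex ℝ ι := by
  rcases eq_or_ne i j with rfl | hij
  · simpa [averagePair] using hz
  refine ⟨fun l => ?_, ?_⟩
  · have hc : 0 ≤ (z i + z j) / 2 := by linarith [hz.1 i, hz.1 j]
    unfold averagePair
    rcases eq_or_ne l j with rfl | hlj
    · simpa using hc
    rcases eq_or_ne l i with rfl | hli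
    · simpa [hlj] using hc
    simpa [hlj, hli] using hz.1 l
  · rw [sum_averagePair, hz.2]

lemma sum_sq_averagePair_lt (z : ι → ℝ) {i j : ι} (hij : i ≠ j) (hz : z i ≠ z j) :
    ∑ l, averagePair z i j l ^ 2 < ∑ l, z l ^ 2 := by
  have hpos : 0 < (z i - z j) ^ 2 := by positivity [sub_ne_zero.2 hz]
  linarith [sum_comp_averagePair (· ^ 2) z hij]

lemma esymmOn_univ_le_averagePair (t : ℕ) {z : ι → ℝ} (hz : ∀ l, 0 ≤ z l) {i j : ι}
    (hij : i ≠ j) : esymmOn univ t z ≤ esymmOn univ t (averagePair z i j) := by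
  match t with
  | 0 => rw [esymmOn_zero, esymmOn_zero]
  | 1 => rw [esymmOn_one, esymmOn_one, sum_averagePair]
  | m + 2 =>
    set R := (univ.erase i).erase j
    have hjR : j ∉ R := notMem_erase j _
    have hiR : i ∉ insert j R := by simp [R, hij]
    have huniv : (univ : Finset ι) = insert i (insert j R) := by
      rw [insert_erase (mem_erase.2 ⟨hij.symm, mem_univ j⟩), insert_erase (mem_univ i)]
    have expand : ∀ w : ι → ℝ, esymmOn univ (m + 2) w = esymmOn R (m + 2) w
        + (w i + w j) * esymmOn R (m + 1) w + w i * w j * esymmOn R m w := fun w => by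
      rw [huniv, esymmOn_insert hiR, esymmOn_insert hjR, esymmOn_insert hjR]
      ring
    have hrest : ∀ p, esymmOn R p (averagePair z i j) = esymmOn R p z := fun p =>
      esymmOn_congr p fun l hl => by
        obtain ⟨hlj, hli⟩ := mem_erase.1 hl
        rw [averagePair, Function.update_of_ne hlj, Function.update_of_ne (ne_of_mem_erase hli)]
    have hzi : averagePair z i j i = (z i + z j) / 2 := by
      rw [averagePair, Function.update_of_ne hij, Function.update_self]
    have hzj : averagePair z i j j = (z i + z j) / 2 := by
      rw [averagePair, Function.update_self]
    have hR := esymmOn_nonneg m fun l (_ : l ∈ R) => hz l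
    rw [expand, expand, hrest, hrest, hrest, hzi, hzj]
    -- AM-GM: `z i * z j ≤ ((z i + z j) / 2) ^ 2`
    nlinarith [mul_nonneg (sq_nonneg (z i - z j)) hR]

end Smoothing

theorem esymmOn_univ_le_of_mem_stdSimplex {ι : Type*} [Fintype ι] (t : ℕ) {w : ι → ℝ}
    (hw : w ∈ stdSimplex ℝ ι) :
    esymmOn univ t w ≤ ((Fintype.card ι).choose t : ℝ) / (Fintype.card ι : ℝ) ^ t := by
  have hcont := continuous_esymmOn (univ : Finset ι) t
  obtain ⟨z₀, hz₀, hmax⟩ :=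
    (isCompact_stdSimplex ℝ ι).exists_isMaxOn ⟨w, hw⟩ hcont.continuousOn
  have hS : IsCompact (stdSimplex ℝ ι ∩ {z | esymmOn univ t z₀ ≤ esymmOn univ t z}) :=
    (isCompact_stdSimplex ℝ ι).inter_right (isClosed_le continuous_const hcont)
  obtain ⟨z, ⟨hz, hzmax⟩, hmin⟩ := hS.exists_isMinOn ⟨z₀, hz₀, le_refl (esymmOn univ t z₀)⟩
    (by fun_prop : Continuous fun z : ι → ℝ => ∑ l, z l ^ 2).continuousOn
  have hconst : ∀ i j, z i = z j := by
    by_contra! ⟨i, j, hne⟩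
    have hij : i ≠ j := fun h => hne (h ▸ rfl)
    have hmem : averagePair z i j ∈ stdSimplex ℝ ι ∩ {z | esymmOn univ t z₀ ≤ esymmOn univ t z} :=
      ⟨averagePair_mem_stdSimplex hz i j, hzmax.trans (esymmOn_univ_le_averagePair t hz.1 hij)⟩
    exact not_lt_of_ge (hmin hmem) (sum_sq_averagePair_lt z hij hne)
  obtain ⟨i₀, -, -⟩ := exists_ne_zero_of_sum_ne_zero (hw.2.symm ▸ one_ne_zero)
  have hz_eq : z = fun _ => (Fintype.card ι : ℝ)⁻¹ := by
    have hcard : (Fintype.card ι : ℝ) * z i₀ = 1 := by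
      rw [← hz.2, sum_congr rfl fun l _ => hconst l i₀, sum_const, card_univ, nsmul_eq_mul]
    exact funext fun l => (hconst l i₀).trans (eq_inv_of_mul_eq_one_right hcard)
  calc esymmOn univ t w ≤ esymmOn univ t z₀ := hmax hw
    _ ≤ esymmOn univ t z := hzmax
    _ = _ := by rw [hz_eq, esymmOn_const, card_univ, inv_pow, div_eq_mul_inv]

theorem esymmOn_le_choose_div_pow {ι : Type*} {s : Finset ι} (t : ℕ) {w : ι → ℝ}
    (h0 : ∀ i ∈ s, 0 ≤ w i) (h1 : ∑ i ∈ s, w i = 1) :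
    esymmOn s t w ≤ (s.card.choose t : ℝ) / (s.card : ℝ) ^ t := by
  have hs : s = univ.map (Function.Embedding.subtype (· ∈ s)) := by
    rw [univ_eq_attach, attach_map_val]
  have h := esymmOn_univ_le_of_mem_stdSimplex t (w := w ∘ Function.Embedding.subtype (· ∈ s))
    ⟨fun i => h0 i i.2, by rw [← h1, ← sum_coe_sort s w]; rfl⟩
  rwa [← esymmOn_map, ← hs, Fintype.card_coe] at h

theorem choose_div_pow_monotone (t : ℕ) :
    Monotone fun k : ℕ => (k.choose t : ℝ) / (k : ℝ) ^ t := by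
  intro k c hkc
  rcases Nat.eq_zero_or_pos k with rfl | hk
  · rcases Nat.eq_zero_or_pos t with rfl | ht
    · simp
    · simp only [Nat.cast_zero, zero_pow ht.ne', div_zero]
      positivity
  have hc : 0 < c := hk.trans_le hkc
  -- `t! C(k, t) / k^t = ∏_{i < t} (1 - i / k)` increases with `k` factor by factor
  have hdesc : k.descFactorial t * c ^ t ≤ c.descFactorial t * k ^ t := by
    rw [Nat.descFactorial_eq_prod_range, Nat.descFactorial_eq_prod_range, ← card_range t,
      ← prod_const, ← prod_const, card_range, ← prod_mul_distrib, ← prod_mul_distrib]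
    refine prod_le_prod' fun i _ => ?_
    rw [Nat.sub_mul, Nat.sub_mul, mul_comm c k]
    exact Nat.sub_le_sub_left (Nat.mul_le_mul_left i hkc) (k * c)
  rw [Nat.descFactorial_eq_factorial_mul_choose, Nat.descFactorial_eq_factorial_mul_choose,
    mul_assoc, mul_assoc] at hdesc
  have key := Nat.le_of_mul_le_mul_left hdesc (Nat.factorial_pos t)
  simp only
  rw [div_le_div_iff₀ (by positivity) (by positivity)]
  exact_mod_cast key

section Graph

variable {n : ℕ} {G : SimpleGraph (Fin n)} {x : Fin n → ℝ}

lemma card_le_cliqueAt {s : Finset (Fin n)} (hs : G.IsClique (s : Set (Fin n))) {v : Fin n}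
    (hv : v ∈ s) : s.card ≤ cliqueAt G v :=
  le_sup (f := card) (mem_filter.2 ⟨mem_univ s, hs, hv⟩)

lemma ktCliques_filter_subset_eq_powersetCard (t : ℕ) {s : Finset (Fin n)}
    (hs : G.IsClique (s : Set (Fin n))) :
    (ktCliques G t).filter (· ⊆ s) = s.powersetCard t := by
  ext T
  simp only [ktCliques, mem_filter, mem_univ, true_and, mem_powersetCard]
  exact ⟨fun ⟨⟨hcard, _⟩, hsub⟩ => ⟨hsub, hcard⟩,
    fun ⟨hsub, hcard⟩ => ⟨⟨hcard, hs.subset (coe_subset.2 hsub)⟩, hsub⟩⟩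

lemma sum_suppF_eq_sum (hx : ∀ v, 0 ≤ x v) {f : Fin n → ℝ} (hf : ∀ v, x v = 0 → f v = 0) :
    ∑ v ∈ suppF x, f v = ∑ v, f v :=
  sum_filter_of_ne fun v _ hfv => (hx v).lt_of_ne' fun hxv => hfv (hf v hxv)

lemma sum_ktCliques_eq_sum_filter_subset_suppF (t : ℕ) (hx : ∀ v, 0 ≤ x v) :
    ∑ s ∈ ktCliques G t, ∏ v ∈ s, x v =
      ∑ s ∈ (ktCliques G t).filter (· ⊆ suppF x), ∏ v ∈ s, x v := by
  refine (sum_filter_of_ne fun s _ hs v hv => ?_).symm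
  simp only [suppF, mem_filter, mem_univ, true_and]
  exact (hx v).lt_of_ne' fun hxv => hs (prod_eq_zero hv hxv)

lemma sum_suppF_self (hx : x ∈ simplex n) : ∑ v ∈ suppF x, x v = 1 :=
  (sum_suppF_eq_sum hx.1 fun _ h => h).trans hx.2

lemma choose_div_pow_le_sum_cliqueAt (t : ℕ) (hx : x ∈ simplex n)
    (hclique : G.IsClique (suppF x : Set (Fin n))) :
    ((suppF x).card.choose t : ℝ) / ((suppF x).card : ℝ) ^ t ≤
      ∑ v, x v * ((cliqueAt G v).choose t : ℝ) / (cliqueAt G v : ℝ) ^ t := by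
  calc ((suppF x).card.choose t : ℝ) / ((suppF x).card : ℝ) ^ t
      = ∑ v ∈ suppF x, x v * (((suppF x).card.choose t : ℝ) / ((suppF x).card : ℝ) ^ t) := by
        rw [← sum_mul, sum_suppF_self hx, one_mul]
    _ ≤ ∑ v ∈ suppF x, x v * (((cliqueAt G v).choose t : ℝ) / (cliqueAt G v : ℝ) ^ t) :=
        sum_le_sum fun v hv => mul_le_mul_of_nonneg_left
          (choose_div_pow_monotone t (card_le_cliqueAt hclique hv)) (hx.1 v)
    _ = ∑ v, x v * ((cliqueAt G v).choose t : ℝ) / (cliqueAt G v : ℝ) ^ t := by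
        simp only [← mul_div_assoc]
        exact sum_suppF_eq_sum hx.1 fun v h => by rw [h, zero_mul, zero_div]

end Graph

theorem stmt19_general {n : ℕ} (t : ℕ) (G : SimpleGraph (Fin n))
    (x : Fin n → ℝ) (k : ℕ) (hx : IsMinimizer G t x)
    (hclique : G.IsClique (suppF x : Set (Fin n))) (hk : (suppF x).card = k) :
    ((k.choose t : ℝ) / (k : ℝ) ^ t -
        ∑ s ∈ (ktCliques G t).filter (fun s => s ⊆ suppF x), ∏ v ∈ s, x v) ≤
        PhiFn G t x ∧
      0 ≤ (k.choose t : ℝ) / (k : ℝ) ^ t -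
        ∑ s ∈ (ktCliques G t).filter (fun s => s ⊆ suppF x), ∏ v ∈ s, x v := by
  obtain ⟨hx, -⟩ := hx
  subst hk
  have hA := choose_div_pow_le_sum_cliqueAt t hx hclique
  have hB := sum_ktCliques_eq_sum_filter_subset_suppF (G := G) t hx.1
  have hmaclaurin : esymmOn (suppF x) t x ≤ _ :=
    esymmOn_le_choose_div_pow t (fun v _ => hx.1 v) (sum_suppF_self hx)
  rw [ktCliques_filter_subset_eq_powersetCard t hclique] at hB ⊢
  exact ⟨by rw [PhiFn, hB]; linarith, sub_nonneg.2 hmaclaurin⟩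

/-- Lower bound for `Φ` at a minimizer whose support induces a `k`-clique, via
Maclaurin's inequality. -/
theorem stmt19 {n : ℕ} (t : ℕ) (ht : 2 ≤ t) (G : SimpleGraph (Fin n))
    (x : Fin n → ℝ) (k : ℕ) (hx : IsMinimizer G t x)
    (hclique : G.IsClique (suppF x : Set (Fin n))) (hk : (suppF x).card = k) :
    ((k.choose t : ℝ) / (k : ℝ) ^ t -
        ∑ s ∈ (ktCliques G t).filter (fun s => s ⊆ suppF x), ∏ v ∈ s, x v) ≤
        PhiFn G t x ∧
      0 ≤ (k.choose t : ℝ) / (k : ℝ) ^ t -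
        ∑ s ∈ (ktCliques G t).filter (fun s => s ⊆ suppF x), ∏ v ∈ s, x v :=
  stmt19_general t G x k hx hclique hk
end
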